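/- The class K(Γ) = {finite L_Γ-trees A : A ≅ Γ(n) for some n ≥ 1} has the disjoint amalgamation property: for A₀, A₁, A₂ ∈ K(Γ) and embeddings f_i : A₀ → A_i (i = 1,2), there exist B ∈ K(Γ) and embeddings j_i : A_i → B with j₁∘f₁ = j₂∘f₂ and j₁[A₁] ∩ j₂[A₂] = j₁∘f₁[A₀]. -/

import Mathlib

/-- A tree plan: a finite set of nodes of `ω^{<ω}` together with a labeling,
`lab σ = true` meaning `λ(σ) = ∞` and `lab σ = false` meaning `λ(σ) = 1`. -/
structure TreePlan where
  nodes : Finset (List ℕ)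
  lab : List ℕ → Bool

/-- The conditions making the data of a `TreePlan` an actual tree plan:
it contains the root, is closed under predecessor, and the root is not an infinity-node. -/
def IsTreePlan (Γ : TreePlan) : Prop :=
  [] ∈ Γ.nodes ∧ (∀ σ ∈ Γ.nodes, σ.dropLast ∈ Γ.nodes) ∧ Γ.lab [] = false

/-- The projection `π` forgetting the second coordinates. -/
def piX {S : Type*} (a : List (ℕ × Option S)) : List ℕ := a.map Prod.fst

/-- The tree `Γ(X)`, for `X` a set in an ambient type `S`.  Entries are pairs `(i, t)`
where `t = none` codes `★` (at nodes with `λ = 1`) and `t = some x` with `x ∈ X`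
at infinity-nodes. -/
def GammaSet (Γ : TreePlan) {S : Type*} (X : Set S) : Set (List (ℕ × Option S)) :=
  {a | piX a ∈ Γ.nodes ∧ ∀ (k : ℕ) (hk : k < a.length),
    (Γ.lab ((piX a).take (k + 1)) = false → (a.get ⟨k, hk⟩).2 = none) ∧
    (Γ.lab ((piX a).take (k + 1)) = true → ∃ x ∈ X, (a.get ⟨k, hk⟩).2 = some x)}

/-- `Γ(ω)`, realized with `X = ℕ`. -/
def GammaOmega (Γ : TreePlan) : Set (List (ℕ × Option ℕ)) :=
  GammaSet Γ (Set.univ : Set ℕ)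

/-- `Γ(n) = Γ([n])` with `[n] = {0, …, n-1} ⊆ ℕ`. -/
def GammaN (Γ : TreePlan) (n : ℕ) : Set (List (ℕ × Option ℕ)) :=
  GammaSet Γ {k : ℕ | k < n}

/-- `↓B`, the downward closure of `B` in `Γ(X)` with respect to the
initial-segment order. -/
def downSet (Γ : TreePlan) {S : Type*} (X : Set S) (B : Set (List (ℕ × Option S))) :
    Set (List (ℕ × Option S)) :=
  {a ∈ GammaSet Γ X | ∃ b ∈ B, a <+: b}

/-- The approximations to the tree closure. -/
def tclAux (Γ : TreePlan) {S : Type*} (X : Set S) (B : Set (List (ℕ × Option S))) :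
    ℕ → Set (List (ℕ × Option S))
  | 0 => insert [] (downSet Γ X B)
  | n + 1 => tclAux Γ X B n ∪
      {a ∈ GammaSet Γ X | Γ.lab (piX a) = false ∧ a.dropLast ∈ tclAux Γ X B n}

/-- The tree closure `tcl(B)` of `B ⊆ Γ(X)`. -/
def tcl (Γ : TreePlan) {S : Type*} (X : Set S) (B : Set (List (ℕ × Option S))) :
    Set (List (ℕ × Option S)) :=
  ⋃ n, tclAux Γ X B n

/-- Longest common prefix of two lists: the meet in the tree of sequences. -/
def lcp {α : Type*} [DecidableEq α] : List α → List α → List α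
  | a :: as, b :: bs => if a = b then a :: lcp as bs else []
  | _, _ => []

/-- Embedding of `L_Γ`-structures between subsets `A`, `B` of trees of sequences:
an injection preserving the order (initial segment), the root, the predecessor,
the meet, and the predicates `P_σ` (i.e. the projection `π`). -/
structure IsGEmb (Γ : TreePlan) {S T : Type*} [DecidableEq S] [DecidableEq T]
    (A : Set (List (ℕ × Option S))) (B : Set (List (ℕ × Option T)))
    (h : List (ℕ × Option S) → List (ℕ × Option T)) : Prop where
  maps : ∀ a ∈ A, h a ∈ B
  inj : ∀ a ∈ A, ∀ b ∈ A, h a = h b → a = b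
  map_root : h [] = []
  map_le : ∀ a ∈ A, ∀ b ∈ A, (a <+: b ↔ h a <+: h b)
  map_pred : ∀ a ∈ A, h a.dropLast = (h a).dropLast
  map_meet : ∀ a ∈ A, ∀ b ∈ A, h (lcp a b) = lcp (h a) (h b)
  map_P : ∀ a ∈ A, piX (h a) = piX a

open Classical in
/-- `I(Γ, σ)`: the number of infinity-nodes `τ ∈ Γ` with `τ ≤ σ`. -/
noncomputable def Icount (Γ : TreePlan) (σ : List ℕ) : ℕ :=
  (Γ.nodes.filter fun τ => Γ.lab τ = true ∧ τ <+: σ).card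

open Classical in
/-- The relative tree plan `Γ_σ = {τ : σ⌢τ ∈ Γ}` with induced labeling. -/
noncomputable def TreePlan.sub (Γ : TreePlan) (σ : List ℕ) : TreePlan where
  nodes := (Γ.nodes.filter fun τ => σ <+: τ).image (List.drop σ.length)
  lab := fun τ => if τ = [] then false else Γ.lab (σ ++ τ)

open Classical in
/-- The successors of the root of `Γ`. -/
noncomputable def rootSuccs (Γ : TreePlan) : Finset ℕ :=
  (Γ.nodes.filter fun σ => σ.length = 1).image fun σ => σ.headI

/-- `deg(Γ) = max {I(Γ,σ) : σ ∈ Γ}`. -/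
noncomputable def degPlan (Γ : TreePlan) : ℕ := Γ.nodes.sup fun σ => Icount Γ σ

open Classical in
/-- `A(Γ)`: the number of nodes of `Γ` of maximal degree. -/
noncomputable def Acoef (Γ : TreePlan) : ℕ :=
  (Γ.nodes.filter fun σ => Icount Γ σ = degPlan Γ).card


/-!
Take `N = n₁ + n₂` and let `j₁` be the inclusion `Γ(n₁) ⊆ Γ(N)`. On the subtree
`D = f₂[Γ(n₀)]` of `Γ(n₂)` we are forced to take `j₂ = f₁ ∘ f₂⁻¹`; a sequence `b ∉ D` is
sent to the image of its longest prefix in `D`, followed by the rest of `b` with all values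
shifted by `n₁`. An embedding `Γ(n₀) → Γ(n₂)` reaches every child of its image at a `1`-node,
so `b` leaves `D` through an `∞`-node, where `j₂ b` takes a value `≥ n₁`; hence
`j₂ b ∉ Γ(n₁)`, which is the disjointness. That `j₂` is an embedding reduces to its preserving
`π` and the prefix order and separating the children of each node.
-/

theorem List.eq_of_prefix_of_prefix_of_length_eq {α : Type*} {u v w : List α} (hu : u <+: w)
    (hv : v <+: w) (h : u.length = v.length) : u = v :=
  (List.prefix_of_prefix_length_le hu hv h.le).eq_of_length h

theorem Descriptive.mem_of_prefix_of_mem_tree {α : Type*} {s : Set (List α)}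
    (hs : s ∈ Descriptive.tree α) {x y : List α} (h : x <+: y) (hy : y ∈ s) : x ∈ s :=
  Descriptive.Tree.mem_of_prefix (T := ⟨s, hs⟩) h hy

theorem List.IsPrefix.take_eq_take {α : Type*} {u v : List α} (h : u <+: v) {k : ℕ}
    (hk : k ≤ u.length) : u.take k = v.take k := by
  rw [List.prefix_iff_eq_take.mp h, List.take_take, min_eq_left hk]

theorem List.IsPrefix.append_getElem_prefix {α : Type*} {u v : List α} (h : u <+: v)
    (hlt : u.length < v.length) : u ++ [v[u.length]] <+: v := by
  have e := List.take_concat_get' v u.length hlt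
  rw [← List.prefix_iff_eq_take.mp h] at e
  exact e ▸ List.take_prefix _ _

section lcp

variable {α : Type*} [DecidableEq α]

theorem lcp_prefix_left : ∀ a b : List α, lcp a b <+: a
  | a :: as, b :: bs => by
    unfold lcp; split
    · exact List.cons_prefix_cons.mpr ⟨rfl, lcp_prefix_left as bs⟩
    · exact List.nil_prefix
  | [], _ | _ :: _, [] => by simp [lcp]

theorem lcp_prefix_right : ∀ a b : List α, lcp a b <+: b
  | a :: as, b :: bs => by
    unfold lcp; split
    · next h => exact List.cons_prefix_cons.mpr ⟨h, lcp_prefix_right as bs⟩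
    · exact List.nil_prefix
  | [], _ | _ :: _, [] => by simp [lcp]

theorem prefix_lcp {u a b : List α} (ha : u <+: a) (hb : u <+: b) : u <+: lcp a b := by
  induction u generalizing a b with
  | nil => exact List.nil_prefix
  | cons x u ih =>
    obtain ⟨y, a, rfl⟩ := List.exists_cons_of_ne_nil (ha.ne_nil (List.cons_ne_nil x u))
    obtain ⟨z, b, rfl⟩ := List.exists_cons_of_ne_nil (hb.ne_nil (List.cons_ne_nil x u))
    obtain ⟨rfl, ha'⟩ := List.cons_prefix_cons.mp ha
    obtain ⟨rfl, hb'⟩ := List.cons_prefix_cons.mp hb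
    simpa [lcp] using ih ha' hb'

theorem lcp_eq_left {a b : List α} (h : a <+: b) : lcp a b = a :=
  List.eq_of_prefix_of_prefix_of_length_eq (lcp_prefix_left a b) List.prefix_rfl
    (le_antisymm (lcp_prefix_left a b).length_le (prefix_lcp List.prefix_rfl h).length_le)

theorem lcp_eq_of_maximal {w a b : List α} (ha : w <+: a) (hb : w <+: b)
    (hmax : ∀ x, w ++ [x] <+: a → w ++ [x] <+: b → False) : lcp a b = w := by
  have hw : w <+: lcp a b := prefix_lcp ha hb
  rcases hw.length_le.eq_or_lt with he | hlt
  · exact (hw.eq_of_length he).symm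
  · have hext := hw.append_getElem_prefix hlt
    exact (hmax _ (hext.trans (lcp_prefix_left a b)) (hext.trans (lcp_prefix_right a b))).elim

end lcp

namespace List

variable {α : Type*}

open Classical in
/-- The longest prefix of `b` lying in `s` (`[]` if there is none). -/
noncomputable def longestPrefixIn (s : Set (List α)) (b : List α) : List α :=
  b.take (Nat.findGreatest (fun k => b.take k ∈ s) b.length)

section longestPrefixIn

open Classical

variable {s : Set (List α)} {b : List α}

theorem longestPrefixIn_prefix (s : Set (List α)) (b : List α) : longestPrefixIn s b <+: b :=
  take_prefix _ _

theorem longestPrefixIn_mem (h0 : [] ∈ s) (b : List α) : longestPrefixIn s b ∈ s :=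
  Nat.findGreatest_spec (P := fun k => b.take k ∈ s) (Nat.zero_le _) (by simpa using h0)

theorem prefix_longestPrefixIn {q : List α} (hq : q ∈ s) (hqb : q <+: b) :
    q <+: longestPrefixIn s b := by
  refine prefix_of_prefix_length_le hqb (longestPrefixIn_prefix s b) ?_
  have hle := Nat.le_findGreatest (P := fun k => b.take k ∈ s) hqb.length_le
    (by rwa [← prefix_iff_eq_take.mp hqb])
  simp only [longestPrefixIn, length_take]
  exact le_min hle hqb.length_le

theorem longestPrefixIn_of_mem (hb : b ∈ s) : longestPrefixIn s b = b :=
  (longestPrefixIn_prefix s b).eq_of_length (le_antisymm (longestPrefixIn_prefix s b).length_le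
    (prefix_longestPrefixIn hb prefix_rfl).length_le)

theorem longestPrefixIn_length_lt (h0 : [] ∈ s) (hb : b ∉ s) :
    (longestPrefixIn s b).length < b.length := by
  refine (longestPrefixIn_prefix s b).length_le.lt_of_ne fun he => hb ?_
  rw [← (longestPrefixIn_prefix s b).eq_of_length he]
  exact longestPrefixIn_mem h0 b

theorem longestPrefixIn_eq_of_prefix {b' : List α} (h0 : [] ∈ s) (hbb' : b <+: b')
    (h : longestPrefixIn s b' <+: b) : longestPrefixIn s b = longestPrefixIn s b' :=
  eq_of_prefix_of_prefix_of_length_eq ((longestPrefixIn_prefix s b).trans hbb')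
    (longestPrefixIn_prefix s b') <| le_antisymm
    (prefix_longestPrefixIn (longestPrefixIn_mem h0 b)
      ((longestPrefixIn_prefix s b).trans hbb')).length_le
    (prefix_longestPrefixIn (longestPrefixIn_mem h0 b') h).length_le

theorem longestPrefixIn_eq_of_prefix_of_not_mem {b' : List α} (hs : s ∈ Descriptive.tree α)
    (h0 : [] ∈ s) (hb : b ∉ s) (hbb' : b <+: b') :
    longestPrefixIn s b = longestPrefixIn s b' := by
  refine longestPrefixIn_eq_of_prefix h0 hbb' ?_
  refine prefix_of_prefix_length_le (longestPrefixIn_prefix s b') hbb' (not_lt.mp fun hlt => hb ?_)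
  exact Descriptive.mem_of_prefix_of_mem_tree hs
    (prefix_of_prefix_length_le hbb' (longestPrefixIn_prefix s b') hlt.le)
    (longestPrefixIn_mem h0 b')

theorem longestPrefixIn_dropLast (h0 : [] ∈ s) (hb : b ∉ s) :
    longestPrefixIn s b.dropLast = longestPrefixIn s b := by
  refine longestPrefixIn_eq_of_prefix h0 (dropLast_prefix b) ?_
  refine prefix_of_prefix_length_le (longestPrefixIn_prefix s b) (dropLast_prefix b) ?_
  have := longestPrefixIn_length_lt h0 hb
  rw [length_dropLast]; omega

end longestPrefixIn

end List

@[simp] theorem length_piX {S : Type*} (a : List (ℕ × Option S)) : (piX a).length = a.length :=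
  List.length_map _

@[simp] theorem piX_append {S : Type*} (a b : List (ℕ × Option S)) :
    piX (a ++ b) = piX a ++ piX b :=
  List.map_append

@[simp] theorem piX_singleton {S : Type*} (e : ℕ × Option S) : piX [e] = [e.1] := rfl

@[simp] theorem piX_map_prodMap_id {S T : Type*} (φ : Option S → Option T)
    (a : List (ℕ × Option S)) : piX (a.map (Prod.map id φ)) = piX a := by
  simp [piX]

namespace TreePlan

/-- The admissible second coordinates of an entry of `Γ(X)` sitting at the node `σ`:
`★ = none` below a `1`-node, an element of `X` below an `∞`-node. -/
def slot (Γ : TreePlan) {S : Type*} (X : Set S) (σ : List ℕ) : Set (Option S) :=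
  if Γ.lab σ = true then some '' X else {none}

variable {Γ : TreePlan} {S : Type*} {X : Set S} {σ : List ℕ}

theorem slot_of_lab_false (h : Γ.lab σ = false) : Γ.slot X σ = {none} := by
  simp [slot, h]

theorem slot_of_lab_true (h : Γ.lab σ = true) : Γ.slot X σ = some '' X := by
  simp [slot, h]

theorem slot_mono {Y : Set S} (h : X ⊆ Y) : Γ.slot X σ ⊆ Γ.slot Y σ := by
  unfold slot; split
  · exact Set.image_mono h
  · exact subset_rfl

theorem map_add_mem_slot {t : Option ℕ} (n₁ : ℕ) {n₂ : ℕ}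
    (ht : t ∈ Γ.slot {k | k < n₂} σ) :
    t.map (n₁ + ·) ∈ Γ.slot {k | k < n₁ + n₂} σ := by
  cases h : Γ.lab σ
  · rw [slot_of_lab_false h] at ht ⊢
    rw [Set.mem_singleton_iff.mp ht]
    rfl
  · rw [slot_of_lab_true h] at ht ⊢
    obtain ⟨x, hx, rfl⟩ := ht
    exact ⟨n₁ + x, Nat.add_lt_add_left hx n₁, rfl⟩

end TreePlan

section GammaSet

open TreePlan

variable {Γ : TreePlan} {S : Type*} {X : Set S} {a b : List (ℕ × Option S)}

theorem mem_gammaSet_iff : a ∈ GammaSet Γ X ↔ piX a ∈ Γ.nodes ∧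
    ∀ (k : ℕ) (hk : k < a.length), a[k].2 ∈ Γ.slot X ((piX a).take (k + 1)) := by
  refine and_congr_right fun _ => forall₂_congr fun k hk => ?_
  cases h : Γ.lab ((piX a).take (k + 1)) <;> simp [slot_of_lab_false, slot_of_lab_true, h, eq_comm]

theorem append_singleton_mem_gammaSet_iff (hΓ : IsTreePlan Γ) (e : ℕ × Option S) :
    a ++ [e] ∈ GammaSet Γ X ↔ a ∈ GammaSet Γ X ∧ piX a ++ [e.1] ∈ Γ.nodes ∧
      e.2 ∈ Γ.slot X (piX a ++ [e.1]) := by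
  have hbelow : ∀ k (hk : k < a.length), (piX a ++ [e.1]).take (k + 1) = (piX a).take (k + 1) :=
    fun k hk => List.take_append_of_le_length (by simp; omega)
  have htop : (piX a ++ [e.1]).take (a.length + 1) = piX a ++ [e.1] :=
    List.take_of_length_le (by simp)
  simp only [mem_gammaSet_iff, piX_append, piX_singleton, List.length_append, List.length_singleton]
  constructor
  · rintro ⟨hnode, hentries⟩
    refine ⟨⟨by simpa using hΓ.2.1 _ hnode, fun k hk => ?_⟩, hnode, ?_⟩
    · simpa [List.getElem_append_left hk, hbelow k hk] using hentries k (by omega)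
    · simpa [htop] using hentries a.length (by omega)
  · rintro ⟨⟨-, hentries⟩, hnode, hlast⟩
    refine ⟨hnode, fun k hk => ?_⟩
    rcases Nat.lt_succ_iff_lt_or_eq.mp hk with hk | rfl
    · simpa [List.getElem_append_left hk, hbelow k hk] using hentries k hk
    · simpa [htop] using hlast

theorem gammaSet_mem_tree (hΓ : IsTreePlan Γ) :
    GammaSet Γ X ∈ Descriptive.tree (ℕ × Option S) :=
  fun _ e h => ((append_singleton_mem_gammaSet_iff hΓ e).mp h).1

theorem nil_mem_gammaSet (hΓ : IsTreePlan Γ) : [] ∈ GammaSet Γ X :=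
  mem_gammaSet_iff.mpr ⟨hΓ.1, fun _ hk => absurd hk (Nat.not_lt_zero _)⟩

theorem gammaSet_mono {Y : Set S} (h : X ⊆ Y) : GammaSet Γ X ⊆ GammaSet Γ Y := fun _ ha =>
  mem_gammaSet_iff.mpr ⟨(mem_gammaSet_iff.mp ha).1,
    fun k hk => slot_mono h ((mem_gammaSet_iff.mp ha).2 k hk)⟩

theorem eq_of_dropLast_eq_of_lab_false (hΓ : IsTreePlan Γ) (ha : a ∈ GammaSet Γ X)
    (hb : b ∈ GammaSet Γ X) (hd : a.dropLast = b.dropLast) (hπ : piX a = piX b)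
    (hl : Γ.lab (piX a) = false) : a = b := by
  rcases List.eq_nil_or_concat' a with rfl | ⟨c, e, rfl⟩
  · simpa using (congrArg List.length hπ).symm
  rcases List.eq_nil_or_concat' b with rfl | ⟨c', e', rfl⟩
  · simpa using congrArg List.length hπ
  simp only [List.dropLast_concat] at hd
  subst hd
  simp only [piX_append, piX_singleton, List.append_cancel_left_eq, List.cons.injEq,
    and_true] at hπ hl
  have he := ((append_singleton_mem_gammaSet_iff hΓ e).mp ha).2.2
  have he' := ((append_singleton_mem_gammaSet_iff hΓ e').mp hb).2.2
  rw [← hπ, slot_of_lab_false hl] at he'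
  rw [slot_of_lab_false hl] at he
  rw [Prod.ext hπ (he.trans he'.symm)]

/-- A subtree `D` containing all children at `1`-nodes of its members is left through an
`∞`-node. -/
theorem lab_take_succ_longestPrefixIn (hΓ : IsTreePlan Γ) {D : Set (List (ℕ × Option S))}
    (h0 : [] ∈ D) (hD : ∀ c e, c ++ [e] ∈ GammaSet Γ X → c ∈ D →
      Γ.lab (piX (c ++ [e])) = false → c ++ [e] ∈ D)
    (hb : b ∈ GammaSet Γ X) (hbD : b ∉ D) :
    Γ.lab ((piX b).take ((List.longestPrefixIn D b).length + 1)) = true := by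
  have hlt := List.longestPrefixIn_length_lt h0 hbD
  have hchild := (List.longestPrefixIn_prefix D b).append_getElem_prefix hlt
  have hπ : piX (List.longestPrefixIn D b ++ [b[(List.longestPrefixIn D b).length]]) =
      (piX b).take ((List.longestPrefixIn D b).length + 1) := by
    simpa [piX] using List.prefix_iff_eq_take.mp (hchild.map Prod.fst)
  by_contra hl
  have := List.prefix_longestPrefixIn (hD _ _ (Descriptive.mem_of_prefix_of_mem_tree
    (gammaSet_mem_tree hΓ) hchild hb) (List.longestPrefixIn_mem h0 b) (by simpa [hπ] using hl))
    hchild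
  simpa using this.length_le

end GammaSet

namespace IsGEmb

section general

variable {Γ : TreePlan} {S T U : Type*} [DecidableEq S] [DecidableEq T] [DecidableEq U]
  {A : Set (List (ℕ × Option S))} {B : Set (List (ℕ × Option T))}
  {C : Set (List (ℕ × Option U))} {f : List (ℕ × Option S) → List (ℕ × Option T)}

theorem length_eq (hf : IsGEmb Γ A B f) {a : List (ℕ × Option S)} (ha : a ∈ A) :
    (f a).length = a.length := by
  rw [← length_piX, hf.map_P a ha, length_piX]

theorem id_of_subset {B : Set (List (ℕ × Option S))} (h : A ⊆ B) : IsGEmb Γ A B id where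
  maps _ ha := h ha
  inj _ _ _ _ := id
  map_root := rfl
  map_le _ _ _ _ := Iff.rfl
  map_pred _ _ := rfl
  map_meet _ _ _ _ := rfl
  map_P _ _ := rfl

theorem comp {g : List (ℕ × Option T) → List (ℕ × Option U)} (hf : IsGEmb Γ A B f)
    (hg : IsGEmb Γ B C g) : IsGEmb Γ A C (g ∘ f) where
  maps a ha := hg.maps _ (hf.maps a ha)
  inj a ha b hb h := hf.inj a ha b hb (hg.inj _ (hf.maps a ha) _ (hf.maps b hb) h)
  map_root := by simp [hf.map_root, hg.map_root]
  map_le a ha b hb := (hf.map_le a ha b hb).trans (hg.map_le _ (hf.maps a ha) _ (hf.maps b hb))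
  map_pred a ha := by simp [hf.map_pred a ha, hg.map_pred _ (hf.maps a ha)]
  map_meet a ha b hb := by
    simp [hf.map_meet a ha b hb, hg.map_meet _ (hf.maps a ha) _ (hf.maps b hb)]
  map_P a ha := by simp [hg.map_P _ (hf.maps a ha), hf.map_P a ha]

theorem leftInvOn_invFunOn (hf : IsGEmb Γ A B f) : Set.LeftInvOn (Function.invFunOn f A) f A :=
  Set.InjOn.leftInvOn_invFunOn fun a ha b hb h => hf.inj a ha b hb h

theorem image_mem_tree (hf : IsGEmb Γ A B f) (hA : A ∈ Descriptive.tree (ℕ × Option S)) :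
    f '' A ∈ Descriptive.tree (ℕ × Option T) := by
  rintro c e ⟨a, ha, hfa⟩
  refine ⟨a.dropLast, Descriptive.mem_of_prefix_of_mem_tree hA (List.dropLast_prefix a) ha, ?_⟩
  rw [hf.map_pred a ha, hfa, List.dropLast_concat]

theorem invFunOn (hf : IsGEmb Γ A B f) (hA : A ∈ Descriptive.tree (ℕ × Option S))
    (h0 : [] ∈ A) : IsGEmb Γ (f '' A) A (Function.invFunOn f A) where
  maps _ hb := Function.invFunOn_mem hb
  inj := by
    rintro _ ⟨a, ha, rfl⟩ _ ⟨b, hb, rfl⟩ h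
    rw [hf.leftInvOn_invFunOn ha, hf.leftInvOn_invFunOn hb] at h
    rw [h]
  map_root := by
    rw [← hf.map_root, hf.leftInvOn_invFunOn h0]
  map_le := by
    rintro _ ⟨a, ha, rfl⟩ _ ⟨b, hb, rfl⟩
    rw [hf.leftInvOn_invFunOn ha, hf.leftInvOn_invFunOn hb, hf.map_le a ha b hb]
  map_pred := by
    rintro _ ⟨a, ha, rfl⟩
    rw [← hf.map_pred a ha, hf.leftInvOn_invFunOn ha,
      hf.leftInvOn_invFunOn (Descriptive.mem_of_prefix_of_mem_tree hA (List.dropLast_prefix a) ha)]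
  map_meet := by
    rintro _ ⟨a, ha, rfl⟩ _ ⟨b, hb, rfl⟩
    rw [← hf.map_meet a ha b hb, hf.leftInvOn_invFunOn ha, hf.leftInvOn_invFunOn hb,
      hf.leftInvOn_invFunOn (Descriptive.mem_of_prefix_of_mem_tree hA (lcp_prefix_left a b) ha)]
  map_P := by
    rintro _ ⟨a, ha, rfl⟩
    rw [hf.leftInvOn_invFunOn ha, hf.map_P a ha]

theorem map_lcp_of_monotone (hA : A ∈ Descriptive.tree (ℕ × Option S))
    (hlen : ∀ a ∈ A, (f a).length = a.length)
    (mono : ∀ a ∈ A, ∀ b ∈ A, a <+: b → f a <+: f b)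
    (sep : ∀ c x y, c ++ [x] ∈ A → c ++ [y] ∈ A → f (c ++ [x]) = f (c ++ [y]) → x = y)
    {a b : List (ℕ × Option S)} (ha : a ∈ A) (hb : b ∈ A) :
    f (lcp a b) = lcp (f a) (f b) := by
  have hpre : ∀ d ∈ A, ∀ q, q <+: d → q ∈ A := fun d hd q hq =>
    Descriptive.mem_of_prefix_of_mem_tree hA hq hd
  set c := lcp a b
  have hc := hpre a ha c (lcp_prefix_left a b)
  refine (lcp_eq_of_maximal (mono c hc a ha (lcp_prefix_left a b))
    (mono c hc b hb (lcp_prefix_right a b)) fun x hxa hxb => ?_).symm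
  -- a common extension of `f c` comes from a child of `c` below each of `a` and `b`
  have child : ∀ d ∈ A, c <+: d → f c ++ [x] <+: f d →
      ∃ y, c ++ [y] <+: d ∧ c ++ [y] ∈ A ∧ f (c ++ [y]) = f c ++ [x] := by
    intro d hd hcd hxd
    have hlt : c.length < d.length := by
      have := hxd.length_le
      simp only [List.length_append, List.length_singleton, hlen c hc, hlen d hd] at this
      omega
    have hyd := hcd.append_getElem_prefix hlt
    have hy := hpre d hd _ hyd
    refine ⟨_, hyd, hy, List.eq_of_prefix_of_prefix_of_length_eq (mono _ hy d hd hyd) hxd ?_⟩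
    simp [hlen _ hy, hlen c hc]
  obtain ⟨y, hya, hy, hfy⟩ := child a ha (lcp_prefix_left a b) hxa
  obtain ⟨z, hzb, hz, hfz⟩ := child b hb (lcp_prefix_right a b) hxb
  obtain rfl := sep c y z hy hz (hfy.trans hfz.symm)
  simpa [c] using (prefix_lcp hya hzb).length_le

theorem of_monotone (hA : A ∈ Descriptive.tree (ℕ × Option S)) (h0 : [] ∈ A)
    (maps : ∀ a ∈ A, f a ∈ B) (map_P : ∀ a ∈ A, piX (f a) = piX a)
    (mono : ∀ a ∈ A, ∀ b ∈ A, a <+: b → f a <+: f b)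
    (sep : ∀ c x y, c ++ [x] ∈ A → c ++ [y] ∈ A → f (c ++ [x]) = f (c ++ [y]) → x = y) :
    IsGEmb Γ A B f := by
  have hlen : ∀ a ∈ A, (f a).length = a.length := fun a ha => by
    rw [← length_piX, map_P a ha, length_piX]
  have map_take : ∀ a ∈ A, ∀ k, f (a.take k) = (f a).take k := fun a ha k => by
    have hk := Descriptive.mem_of_prefix_of_mem_tree hA (List.take_prefix k a) ha
    refine List.eq_of_prefix_of_prefix_of_length_eq (mono _ hk a ha (List.take_prefix k a))
      (List.take_prefix k (f a)) ?_
    simp [hlen _ hk, hlen a ha]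
  have map_meet := fun a ha b hb => map_lcp_of_monotone hA hlen mono sep (a := a) (b := b) ha hb
  have reflect : ∀ a ∈ A, ∀ b ∈ A, f a <+: f b → a <+: b := by
    intro a ha b hb h
    have hc := Descriptive.mem_of_prefix_of_mem_tree hA (lcp_prefix_left a b) ha
    have : (lcp a b).length = a.length := by
      rw [← hlen _ hc, ← hlen a ha, map_meet a ha b hb, lcp_eq_left h]
    exact (lcp_prefix_left a b).eq_of_length this ▸ lcp_prefix_right a b
  exact {
    maps := maps
    inj := fun a ha b hb h => List.eq_of_prefix_of_prefix_of_length_eq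
      (reflect a ha b hb (h ▸ List.prefix_rfl)) List.prefix_rfl
      (by rw [← hlen a ha, ← hlen b hb, h])
    map_root := by simpa using map_take [] h0 0
    map_le := fun a ha b hb => ⟨mono a ha b hb, reflect a ha b hb⟩
    map_pred := fun a ha => by
      rw [List.dropLast_eq_take, map_take a ha, List.dropLast_eq_take, hlen a ha]
    map_meet := map_meet
    map_P := map_P }

end general

variable {Γ : TreePlan} {S T : Type*} [DecidableEq S] [DecidableEq T] {X : Set S} {Y : Set T}
  {f : List (ℕ × Option S) → List (ℕ × Option T)}

theorem append_singleton_mem_image (hΓ : IsTreePlan Γ)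
    (hf : IsGEmb Γ (GammaSet Γ X) (GammaSet Γ Y) f)
    {c : List (ℕ × Option T)} {e : ℕ × Option T} (hce : c ++ [e] ∈ GammaSet Γ Y)
    (hc : c ∈ f '' GammaSet Γ X) (hl : Γ.lab (piX (c ++ [e])) = false) :
    c ++ [e] ∈ f '' GammaSet Γ X := by
  obtain ⟨a, ha, rfl⟩ := hc
  have hπ : piX (f a ++ [e]) = piX (a ++ [(e.1, none)]) := by simp [hf.map_P a ha]
  have ha' : a ++ [(e.1, none)] ∈ GammaSet Γ X := by
    have hnode : piX (f a ++ [e]) ∈ Γ.nodes := (mem_gammaSet_iff.mp hce).1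
    rw [hπ] at hnode hl
    simp only [piX_append, piX_singleton] at hnode hl
    exact (append_singleton_mem_gammaSet_iff hΓ _).mpr
      ⟨ha, hnode, by simp [TreePlan.slot_of_lab_false hl]⟩
  refine ⟨_, ha', eq_of_dropLast_eq_of_lab_false hΓ (hf.maps _ ha') hce ?_ ?_ ?_⟩
  · rw [← hf.map_pred _ ha', List.dropLast_concat, List.dropLast_concat]
  · rw [hf.map_P _ ha', hπ]
  · rwa [hf.map_P _ ha', ← hπ]

end IsGEmb

section freshExtension

open List TreePlan

/-- Extends `g : D → Γ(n)` beyond `D`: the part of `b` after its longest prefix in `D` is copied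
with its values shifted by `n`, so that the values it introduces avoid `[n]`. -/
noncomputable def freshExtension (D : Set (List (ℕ × Option ℕ)))
    (g : List (ℕ × Option ℕ) → List (ℕ × Option ℕ)) (n : ℕ) (b : List (ℕ × Option ℕ)) :
    List (ℕ × Option ℕ) :=
  g (longestPrefixIn D b) ++
    (b.drop (longestPrefixIn D b).length).map (Prod.map id (Option.map (n + ·)))

variable {Γ : TreePlan} {n₁ n₂ : ℕ} {D : Set (List (ℕ × Option ℕ))}
  {g : List (ℕ × Option ℕ) → List (ℕ × Option ℕ)} {b : List (ℕ × Option ℕ)}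

theorem freshExtension_of_mem (hb : b ∈ D) : freshExtension D g n₁ b = g b := by
  simp [freshExtension, longestPrefixIn_of_mem hb]

theorem piX_freshExtension (h0 : [] ∈ D) (hg : IsGEmb Γ D (GammaN Γ n₁) g) (b) :
    piX (freshExtension D g n₁ b) = piX b := by
  conv_rhs => rw [← prefix_iff_eq_append.mp (longestPrefixIn_prefix D b)]
  rw [freshExtension, piX_append, piX_append, hg.map_P _ (longestPrefixIn_mem h0 b),
    piX_map_prodMap_id]

theorem length_freshExtension (h0 : [] ∈ D) (hg : IsGEmb Γ D (GammaN Γ n₁) g) (b) :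
    (freshExtension D g n₁ b).length = b.length := by
  rw [← length_piX, piX_freshExtension h0 hg, length_piX]

theorem snd_getElem_freshExtension_mem_of_lt (h0 : [] ∈ D) (hg : IsGEmb Γ D (GammaN Γ n₁) g)
    {k : ℕ} (hk : k < (longestPrefixIn D b).length)
    (hk' : k < (freshExtension D g n₁ b).length) :
    (freshExtension D g n₁ b)[k].2 ∈ Γ.slot {x | x < n₁} ((piX b).take (k + 1)) := by
  have hP := longestPrefixIn_mem h0 b
  have hkg : k < (g (longestPrefixIn D b)).length := by rwa [hg.length_eq hP]
  have hnode : (piX (g (longestPrefixIn D b))).take (k + 1) = (piX b).take (k + 1) := by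
    rw [hg.map_P _ hP]
    exact ((longestPrefixIn_prefix D b).map Prod.fst).take_eq_take (by simp; omega)
  have hentry : (freshExtension D g n₁ b)[k] = (g (longestPrefixIn D b))[k] :=
    getElem_append_left hkg
  rw [hentry, ← hnode]
  exact (mem_gammaSet_iff.mp (hg.maps _ hP)).2 k hkg

theorem getElem_freshExtension_of_le (h0 : [] ∈ D) (hg : IsGEmb Γ D (GammaN Γ n₁) g) {k : ℕ}
    (hk : (longestPrefixIn D b).length ≤ k) (hk' : k < (freshExtension D g n₁ b).length) :
    (freshExtension D g n₁ b)[k] = Prod.map id (Option.map (n₁ + ·))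
      (b[k]'(by rwa [← length_freshExtension h0 hg b])) := by
  have hlen := hg.length_eq (longestPrefixIn_mem h0 b)
  simp only [freshExtension]
  rw [getElem_append_right (by omega), getElem_map, getElem_drop]
  congr
  omega

theorem freshExtension_mem (h0 : [] ∈ D) (hg : IsGEmb Γ D (GammaN Γ n₁) g)
    (hb : b ∈ GammaN Γ n₂) : freshExtension D g n₁ b ∈ GammaN Γ (n₁ + n₂) := by
  refine mem_gammaSet_iff.mpr ⟨?_, fun k hk => ?_⟩ <;> rw [piX_freshExtension h0 hg]
  · exact (mem_gammaSet_iff.mp hb).1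
  by_cases hkP : k < (longestPrefixIn D b).length
  · exact slot_mono (fun x (hx : x < n₁) => show x < n₁ + n₂ by omega)
      (snd_getElem_freshExtension_mem_of_lt h0 hg hkP hk)
  · rw [getElem_freshExtension_of_le h0 hg (not_lt.mp hkP)]
    exact map_add_mem_slot n₁ ((mem_gammaSet_iff.mp hb).2 k _)

theorem exists_snd_getElem_freshExtension (h0 : [] ∈ D) (hg : IsGEmb Γ D (GammaN Γ n₁) g)
    (hb : b ∈ GammaN Γ n₂) {k : ℕ} (hk : k < (freshExtension D g n₁ b).length)
    (hl : Γ.lab ((piX b).take (k + 1)) = true) :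
    ∃ y, (freshExtension D g n₁ b)[k].2 = some y ∧
      (y < n₁ ↔ k < (longestPrefixIn D b).length) := by
  by_cases hkP : k < (longestPrefixIn D b).length
  · have := snd_getElem_freshExtension_mem_of_lt h0 hg hkP hk
    rw [slot_of_lab_true hl] at this
    obtain ⟨y, hy, he⟩ := this
    exact ⟨y, he.symm, iff_of_true hy hkP⟩
  · have := (mem_gammaSet_iff.mp hb).2 k (by rwa [← length_freshExtension h0 hg b])
    rw [slot_of_lab_true hl] at this
    obtain ⟨x, -, he⟩ := this
    refine ⟨n₁ + x, ?_, iff_of_false (by omega) hkP⟩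
    rw [getElem_freshExtension_of_le h0 hg (not_lt.mp hkP), Prod.map_snd, ← he]
    rfl

theorem freshExtension_mono (hD : D ∈ Descriptive.tree (ℕ × Option ℕ)) (h0 : [] ∈ D)
    (hg : IsGEmb Γ D (GammaN Γ n₁) g) {a : List (ℕ × Option ℕ)} (hab : a <+: b) :
    freshExtension D g n₁ a <+: freshExtension D g n₁ b := by
  by_cases haD : a ∈ D
  · rw [freshExtension_of_mem haD]
    refine ((hg.map_le a haD _ (longestPrefixIn_mem h0 b)).mp ?_).trans (prefix_append _ _)
    exact prefix_longestPrefixIn haD hab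
  · rw [freshExtension, freshExtension, longestPrefixIn_eq_of_prefix_of_not_mem hD h0 haD hab]
    exact (prefix_append_right_inj _).mpr ((hab.drop _).map _)

theorem eq_of_freshExtension_eq_of_longestPrefixIn_eq {a : List (ℕ × Option ℕ)}
    (hP : longestPrefixIn D a = longestPrefixIn D b)
    (h : freshExtension D g n₁ a = freshExtension D g n₁ b) : a = b := by
  have hshift : Function.Injective (Prod.map (id : ℕ → ℕ) (Option.map (n₁ + ·))) :=
    Prod.map_injective.mpr
      ⟨Function.injective_id, Option.map_injective (add_right_injective n₁)⟩
  simp only [freshExtension, hP, append_cancel_left_eq] at h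
  rw [← prefix_iff_eq_append.mp (longestPrefixIn_prefix D a),
    ← prefix_iff_eq_append.mp (longestPrefixIn_prefix D b), hP, map_injective_iff.mpr hshift h]

theorem freshExtension_ne_of_mem_of_not_mem (hΓ : IsTreePlan Γ) (h0 : [] ∈ D)
    (hg : IsGEmb Γ D (GammaN Γ n₁) g) {c : List (ℕ × Option ℕ)} {x y : ℕ × Option ℕ}
    (hx : c ++ [x] ∈ GammaN Γ n₂) (hy : c ++ [y] ∈ GammaN Γ n₂) (hxD : c ++ [x] ∈ D)
    (hyD : c ++ [y] ∉ D) :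
    freshExtension D g n₁ (c ++ [x]) ≠ freshExtension D g n₁ (c ++ [y]) := by
  intro h
  have hπ : piX (c ++ [x]) = piX (c ++ [y]) := by
    rw [← piX_freshExtension h0 hg, h, piX_freshExtension h0 hg]
  cases hl : Γ.lab (piX (c ++ [x]))
  · exact hyD (eq_of_dropLast_eq_of_lab_false hΓ hx hy (by simp) hπ hl ▸ hxD)
  have hnode : ∀ z, (piX (c ++ [z])).take (c.length + 1) = piX (c ++ [z]) := fun z =>
    take_of_length_le (by simp)
  have hkx : c.length < (freshExtension D g n₁ (c ++ [x])).length := by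
    simp [length_freshExtension h0 hg]
  have hky : c.length < (freshExtension D g n₁ (c ++ [y])).length := h ▸ hkx
  obtain ⟨u, hu, hu_old⟩ := exists_snd_getElem_freshExtension h0 hg hx hkx (by rwa [hnode])
  obtain ⟨v, hv, hv_old⟩ :=
    exists_snd_getElem_freshExtension h0 hg hy hky (by rwa [hnode, ← hπ])
  have huv : u = v := Option.some_injective _ (hu.symm.trans ((getElem_of_eq h hkx) ▸ hv))
  have hold : c.length < (longestPrefixIn D (c ++ [x])).length := by
    simp [longestPrefixIn_of_mem hxD]
  have hnew := longestPrefixIn_length_lt h0 hyD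
  simp only [length_append, length_singleton] at hnew
  exact absurd (hv_old.mp (huv ▸ hu_old.mpr hold)) (by omega)

theorem eq_of_freshExtension_append_singleton_eq (hΓ : IsTreePlan Γ) (h0 : [] ∈ D)
    (hg : IsGEmb Γ D (GammaN Γ n₁) g)
    {c : List (ℕ × Option ℕ)} {x y : ℕ × Option ℕ} (hx : c ++ [x] ∈ GammaN Γ n₂)
    (hy : c ++ [y] ∈ GammaN Γ n₂)
    (h : freshExtension D g n₁ (c ++ [x]) = freshExtension D g n₁ (c ++ [y])) : x = y := by
  suffices c ++ [x] = c ++ [y] by simpa using this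
  by_cases hxD : c ++ [x] ∈ D <;> by_cases hyD : c ++ [y] ∈ D
  · rw [freshExtension_of_mem hxD, freshExtension_of_mem hyD] at h
    exact hg.inj _ hxD _ hyD h
  · exact (freshExtension_ne_of_mem_of_not_mem hΓ h0 hg hx hy hxD hyD h).elim
  · exact (freshExtension_ne_of_mem_of_not_mem hΓ h0 hg hy hx hyD hxD h.symm).elim
  · refine eq_of_freshExtension_eq_of_longestPrefixIn_eq ?_ h
    rw [← longestPrefixIn_dropLast h0 hxD, ← longestPrefixIn_dropLast h0 hyD, dropLast_concat,
      dropLast_concat]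

theorem isGEmb_freshExtension (hΓ : IsTreePlan Γ) (hD : D ∈ Descriptive.tree (ℕ × Option ℕ))
    (h0 : [] ∈ D) (hg : IsGEmb Γ D (GammaN Γ n₁) g) :
    IsGEmb Γ (GammaN Γ n₂) (GammaN Γ (n₁ + n₂)) (freshExtension D g n₁) :=
  IsGEmb.of_monotone (gammaSet_mem_tree hΓ) (nil_mem_gammaSet hΓ)
    (fun _ hb => freshExtension_mem h0 hg hb) (fun b _ => piX_freshExtension h0 hg b)
    (fun _ _ _ _ hab => freshExtension_mono hD h0 hg hab)
    (fun _ _ _ hx hy => eq_of_freshExtension_append_singleton_eq hΓ h0 hg hx hy)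

theorem freshExtension_not_mem (h0 : [] ∈ D) (hg : IsGEmb Γ D (GammaN Γ n₁) g)
    (hb : b ∈ GammaN Γ n₂) (hbD : b ∉ D)
    (hl : Γ.lab ((piX b).take ((longestPrefixIn D b).length + 1)) = true) :
    freshExtension D g n₁ b ∉ GammaN Γ n₁ := by
  intro hmem
  have hk : (longestPrefixIn D b).length < (freshExtension D g n₁ b).length := by
    rw [length_freshExtension h0 hg]
    exact longestPrefixIn_length_lt h0 hbD
  obtain ⟨y, hy, hy_old⟩ := exists_snd_getElem_freshExtension h0 hg hb hk hl
  have := (mem_gammaSet_iff.mp hmem).2 _ hk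
  rw [piX_freshExtension h0 hg, slot_of_lab_true hl, hy] at this
  obtain ⟨z, hz, hzy⟩ := this
  exact lt_irrefl _ (hy_old.mp (Option.some_injective _ hzy ▸ hz))

end freshExtension

theorem disjoint_amalgamation_general (Γ : TreePlan) (hΓ : IsTreePlan Γ)
    (n₀ n₁ n₂ : ℕ) (hn₁ : 1 ≤ n₁)
    (f₁ f₂ : List (ℕ × Option ℕ) → List (ℕ × Option ℕ))
    (hf₁ : IsGEmb Γ (GammaN Γ n₀) (GammaN Γ n₁) f₁)
    (hf₂ : IsGEmb Γ (GammaN Γ n₀) (GammaN Γ n₂) f₂) :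
    ∃ (N : ℕ) (j₁ j₂ : List (ℕ × Option ℕ) → List (ℕ × Option ℕ)),
      1 ≤ N ∧
      IsGEmb Γ (GammaN Γ n₁) (GammaN Γ N) j₁ ∧
      IsGEmb Γ (GammaN Γ n₂) (GammaN Γ N) j₂ ∧
      (∀ a ∈ GammaN Γ n₀, j₁ (f₁ a) = j₂ (f₂ a)) ∧
      (j₁ '' GammaN Γ n₁) ∩ (j₂ '' GammaN Γ n₂) = j₁ '' (f₁ '' GammaN Γ n₀) := by
  set D := f₂ '' GammaN Γ n₀
  set g := f₁ ∘ Function.invFunOn f₂ (GammaN Γ n₀)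
  have hg : IsGEmb Γ D (GammaN Γ n₁) g :=
    (hf₂.invFunOn (gammaSet_mem_tree hΓ) (nil_mem_gammaSet hΓ)).comp hf₁
  have hD : D ∈ Descriptive.tree _ := hf₂.image_mem_tree (gammaSet_mem_tree hΓ)
  have h0 : [] ∈ D := ⟨[], nil_mem_gammaSet hΓ, hf₂.map_root⟩
  have hcomm : ∀ a ∈ GammaN Γ n₀, freshExtension D g n₁ (f₂ a) = f₁ a := fun a ha => by
    rw [freshExtension_of_mem (Set.mem_image_of_mem f₂ ha)]
    exact congrArg f₁ (hf₂.leftInvOn_invFunOn ha)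
  refine ⟨n₁ + n₂, id, freshExtension D g n₁, by omega,
    IsGEmb.id_of_subset (gammaSet_mono fun x (hx : x < n₁) => show x < n₁ + n₂ by omega),
    isGEmb_freshExtension hΓ hD h0 hg, fun a ha => (hcomm a ha).symm, ?_⟩
  rw [Set.image_id, Set.image_id]
  refine subset_antisymm ?_ fun _ ⟨a, ha, hfa⟩ =>
    ⟨hfa ▸ hf₁.maps a ha, f₂ a, hf₂.maps a ha, hfa ▸ hcomm a ha⟩
  rintro _ ⟨hb₁, b, hb, rfl⟩
  by_cases hbD : b ∈ D
  · obtain ⟨a, ha, rfl⟩ := hbD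
    exact ⟨a, ha, (hcomm a ha).symm⟩
  · refine absurd hb₁ (freshExtension_not_mem h0 hg hb hbD ?_)
    exact lab_take_succ_longestPrefixIn hΓ h0
      (fun _ _ hce hc hl => hf₂.append_singleton_mem_image hΓ hce hc hl) hb hbD

/-- The class `K(Γ)` (represented by its canonical members `Γ(n)`, `n ≥ 1`) has the
disjoint amalgamation property: given embeddings `f₁ : Γ(n₀) → Γ(n₁)` and
`f₂ : Γ(n₀) → Γ(n₂)`, there are `N` and embeddings `jᵢ : Γ(nᵢ) → Γ(N)` with
`j₁ ∘ f₁ = j₂ ∘ f₂` on `Γ(n₀)` and `j₁[Γ(n₁)] ∩ j₂[Γ(n₂)] = j₁[f₁[Γ(n₀)]]`. -/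
theorem disjoint_amalgamation (Γ : TreePlan) (hΓ : IsTreePlan Γ)
    (n₀ n₁ n₂ : ℕ) (hn₀ : 1 ≤ n₀) (hn₁ : 1 ≤ n₁) (hn₂ : 1 ≤ n₂)
    (f₁ f₂ : List (ℕ × Option ℕ) → List (ℕ × Option ℕ))
    (hf₁ : IsGEmb Γ (GammaN Γ n₀) (GammaN Γ n₁) f₁)
    (hf₂ : IsGEmb Γ (GammaN Γ n₀) (GammaN Γ n₂) f₂) :
    ∃ (N : ℕ) (j₁ j₂ : List (ℕ × Option ℕ) → List (ℕ × Option ℕ)),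
      1 ≤ N ∧
      IsGEmb Γ (GammaN Γ n₁) (GammaN Γ N) j₁ ∧
      IsGEmb Γ (GammaN Γ n₂) (GammaN Γ N) j₂ ∧
      (∀ a ∈ GammaN Γ n₀, j₁ (f₁ a) = j₂ (f₂ a)) ∧
      (j₁ '' GammaN Γ n₁) ∩ (j₂ '' GammaN Γ n₂) = j₁ '' (f₁ '' GammaN Γ n₀) :=
  disjoint_amalgamation_general Γ hΓ n₀ n₁ n₂ hn₁ f₁ f₂ hf₁ hf₂
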